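/- With ω = e^{2πi/3}, G = diag(1, ω², ω²), R = H·G·Hᴴ and H the qutrit Hadamard, the inverse Hᴴ satisfies Hᴴ = c · Gᴴ·Rᴴ·Gᴴ for some nonzero complex scalar c (Euler decomposition of H†). -/

import Mathlib

noncomputable def ω : ℂ := Complex.exp (2 * Real.pi * Complex.I / 3)

noncomputable def H : Matrix (Fin 3) (Fin 3) ℂ :=
  Matrix.of fun j k => (1 / Real.sqrt 3 : ℂ) * ω ^ (j.val * k.val)

noncomputable def G : Matrix (Fin 3) (Fin 3) ℂ :=
  Matrix.diagonal ![1, ω ^ 2, ω ^ 2]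

noncomputable def R : Matrix (Fin 3) (Fin 3) ℂ :=
  H * G * H.conjTranspose

/-!
Write `H = F(ω) / √3` with `F(ζ)ⱼₖ = ζ^(jk)`. Since `conj ω = ω²`, we get `Hᴴ = F(ω²) / √3` and
`Gᴴ = diag(1, ω, ω) =: D`, while `Rᴴ = H D Hᴴ`. The claim thus reduces to the identity
`D F(ω) D F(ω²) D = (1 + 2ω) F(ω²)`, which holds for any root `ζ` of `ζ² + ζ + 1` in any commutative
ring. The scalar is `c = √3 / (1 + 2ω)`, i.e. `c = -i`, as `1 + 2ω = i√3`.
-/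

open Matrix

section CubeRootOfUnity

variable {α : Type*} [CommRing α]

def fourierMatrix (ζ : α) : Matrix (Fin 3) (Fin 3) α :=
  of fun j k => ζ ^ (j.val * k.val)

def phaseMatrix (ζ : α) : Matrix (Fin 3) (Fin 3) α :=
  diagonal ![1, ζ, ζ]

theorem phaseMatrix_mul_fourierMatrix_mul_phaseMatrix_mul_fourierMatrix_sq_mul_phaseMatrix
    {ζ : α} (hζ : ζ ^ 2 + ζ + 1 = 0) :
    phaseMatrix ζ * fourierMatrix ζ * phaseMatrix ζ * fourierMatrix (ζ ^ 2) * phaseMatrix ζ =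
      (1 + 2 * ζ) • fourierMatrix (ζ ^ 2) := by
  ext i j
  fin_cases i <;> fin_cases j <;>
    simp [phaseMatrix, fourierMatrix, mul_apply, Fin.sum_univ_three] <;>
    grind

end CubeRootOfUnity

theorem isPrimitiveRoot_ω : IsPrimitiveRoot ω 3 := by
  simpa [ω] using Complex.isPrimitiveRoot_exp 3 (by norm_num)

theorem ω_sq_add_ω_add_one : ω ^ 2 + ω + 1 = 0 := by
  have h := isPrimitiveRoot_ω.geom_sum_eq_zero (by norm_num)
  simp only [Finset.sum_range_succ, Finset.sum_range_zero] at h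
  linear_combination h

theorem one_add_two_mul_ω_ne_zero : 1 + 2 * ω ≠ 0 := by
  intro h
  have hsq : (1 + 2 * ω) ^ 2 = -3 := by linear_combination 4 * ω_sq_add_ω_add_one
  rw [h] at hsq
  norm_num at hsq

theorem star_ω : star ω = ω ^ 2 := by
  have h3 := isPrimitiveRoot_ω.pow_eq_one
  rw [Complex.star_def,
    ← Complex.inv_eq_conj (Complex.norm_eq_one_of_pow_eq_one h3 (by norm_num))]
  exact (eq_inv_of_mul_eq_one_left (by rw [← pow_succ, h3])).symm

theorem star_ω_sq : star (ω ^ 2) = ω := by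
  rw [star_pow, star_ω, ← pow_mul, show 2 * 2 = 3 + 1 by rfl, pow_succ,
    isPrimitiveRoot_ω.pow_eq_one, one_mul]

theorem H_eq_smul_fourierMatrix : H = (1 / Real.sqrt 3 : ℂ) • fourierMatrix ω := by
  ext j k
  simp [H, fourierMatrix]

theorem conjTranspose_H : Hᴴ = (1 / Real.sqrt 3 : ℂ) • fourierMatrix (ω ^ 2) := by
  have hstar : star (1 / Real.sqrt 3 : ℂ) = 1 / Real.sqrt 3 := by simp
  rw [H_eq_smul_fourierMatrix, conjTranspose_smul, hstar]
  congr 1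
  ext j k
  simp [fourierMatrix, ← star_ω, mul_comm]

theorem conjTranspose_G : Gᴴ = phaseMatrix ω := by
  rw [G, diagonal_conjTranspose, phaseMatrix]
  congr 1
  ext i
  fin_cases i <;> simp <;> rw [← Complex.star_def, ← star_pow, star_ω_sq]

theorem euler_decomposition_dagger :
    ∃ c : ℂ, c ≠ 0 ∧
      H.conjTranspose = c • (G.conjTranspose * R.conjTranspose * G.conjTranspose) := by
  refine ⟨Real.sqrt 3 / (1 + 2 * ω), div_ne_zero (by simp) one_add_two_mul_ω_ne_zero, ?_⟩
  rw [R, conjTranspose_mul, conjTranspose_mul, conjTranspose_conjTranspose, conjTranspose_G,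
    conjTranspose_H, H_eq_smul_fourierMatrix]
  simp only [Matrix.smul_mul, Matrix.mul_smul, smul_smul, ← Matrix.mul_assoc]
  rw [phaseMatrix_mul_fourierMatrix_mul_phaseMatrix_mul_fourierMatrix_sq_mul_phaseMatrix
    ω_sq_add_ω_add_one, smul_smul]
  congr 1
  field_simp [one_add_two_mul_ω_ne_zero]
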